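/- Let f : ℂ² → ℝ be defined by f(x₁+iy₁, x₂+iy₂) = y₁² + y₂². For a finite arrangement 𝒜 of real lines in ℝ² ⊂ ℂ² (complexified), and any ε > 0, the set N_ε = {p ∈ ℂ² \ 𝒜 : f(p) ≤ ε} is a deformation retract (homotopy equivalent subspace) of ℂ² \ 𝒜. -/

import Mathlib

/-!
For real `a, b, c` and `u ≠ 0`, the map `x + iy ↦ x + iuy` (on both coordinates) preserves the
equation `a z₁ + b z₂ = c`: its real part is unchanged and its imaginary part
`a y₁ + b y₂ = 0` is homogeneous. Hence shrinking the imaginary part of every point of `ℂ² ∖ 𝒜`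
radially onto the ball `y₁² + y₂² ≤ ε`, through nonzero factors, is a deformation retraction
of `ℂ² ∖ 𝒜` onto `N_ε`.
-/

open Complex unitInterval
open scoped ContinuousMap

theorem exists_homotopyEquiv_inclusion_of_deformation {α : Type*} [TopologicalSpace α]
    {N X : Set α} (hNX : N ⊆ X) (H : C(I × α, α))
    (hX : ∀ t, ∀ x ∈ X, H (t, x) ∈ X) (h₀ : ∀ x ∈ X, H (0, x) ∈ N)
    (hN : ∀ x ∈ N, H (0, x) = x) (h₁ : ∀ x, H (1, x) = x) :
    ∃ e : N ≃ₕ X, ∀ q, (e.toFun q : α) = q := by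
  let incl : C(N, X) := ⟨Set.inclusion hNX, continuous_inclusion hNX⟩
  let r : C(X, N) := ⟨fun x => ⟨H (0, x), h₀ x x.2⟩, by fun_prop⟩
  have hr_incl : r.comp incl = ContinuousMap.id N :=
    ContinuousMap.ext fun q => Subtype.ext (hN q q.2)
  let deform : (incl.comp r).Homotopy (ContinuousMap.id X) :=
    { toFun := fun tx => ⟨H (tx.1, tx.2), hX tx.1 tx.2 tx.2.2⟩
      continuous_toFun := by fun_prop
      map_zero_left := fun _ => rfl
      map_one_left := fun x => Subtype.ext (h₁ x) }
  exact ⟨⟨incl, r, hr_incl ▸ .refl _, ⟨deform⟩⟩, fun _ => rfl⟩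

def imScale (u : ℝ) (z : ℂ) : ℂ := ⟨z.re, u * z.im⟩

@[simp] lemma imScale_re (u : ℝ) (z : ℂ) : (imScale u z).re = z.re := rfl

@[simp] lemma imScale_im (u : ℝ) (z : ℂ) : (imScale u z).im = u * z.im := rfl

@[simp] lemma imScale_one : imScale 1 = id := funext fun _ => Complex.ext rfl (one_mul _)

@[fun_prop] lemma continuous_imScale : Continuous fun x : ℝ × ℂ => imScale x.1 x.2 :=
  Complex.equivRealProdCLM.symm.continuous.comp
    (by fun_prop : Continuous fun x : ℝ × ℂ => (x.2.re, x.1 * x.2.im))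

lemma ofReal_mul_imScale_add (u a b : ℝ) (z w : ℂ) :
    a * imScale u z + b * imScale u w = imScale u (a * z + b * w) := by
  apply Complex.ext <;> simp; ring

lemma imScale_eq_ofReal_iff {u : ℝ} (hu : u ≠ 0) (z : ℂ) (c : ℝ) :
    imScale u z = c ↔ z = c := by
  simp [Complex.ext_iff, hu]

lemma real_line_eq_imScale_iff {u : ℝ} (hu : u ≠ 0) (a b c : ℝ) (p : ℂ × ℂ) :
    a * imScale u p.1 + b * imScale u p.2 = c ↔ a * p.1 + b * p.2 = c := by
  rw [ofReal_mul_imScale_add, imScale_eq_ofReal_iff hu]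

variable {ι : Type*}

def arrangementCompl (a b c : ι → ℝ) : Set (ℂ × ℂ) :=
  {p | ¬ ∃ i, (a i : ℂ) * p.1 + (b i : ℂ) * p.2 = (c i : ℂ)}

def imNormSq (p : ℂ × ℂ) : ℝ := p.1.im ^ 2 + p.2.im ^ 2

@[fun_prop] lemma continuous_imNormSq : Continuous imNormSq := by
  unfold imNormSq; fun_prop

lemma imScale_mem_arrangementCompl_iff {u : ℝ} (hu : u ≠ 0) (a b c : ι → ℝ) (p : ℂ × ℂ) :
    (imScale u p.1, imScale u p.2) ∈ arrangementCompl a b c ↔ p ∈ arrangementCompl a b c :=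
  not_congr <| exists_congr fun i => real_line_eq_imScale_iff hu (a i) (b i) (c i) p

lemma imNormSq_imScale (u : ℝ) (p : ℂ × ℂ) :
    imNormSq (imScale u p.1, imScale u p.2) = u ^ 2 * imNormSq p := by
  simp only [imNormSq, imScale_im]; ring

/-- Scaling the imaginary parts of `p` by this factor brings `p` into the tube `imNormSq ≤ ε`. -/
noncomputable def tubeFactor (ε : ℝ) (p : ℂ × ℂ) : ℝ := √(ε / max ε (imNormSq p))

section tubeFactor

variable {ε : ℝ} (hε : 0 < ε)
include hε

lemma max_imNormSq_pos (p : ℂ × ℂ) : 0 < max ε (imNormSq p) :=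
  hε.trans_le (le_max_left _ _)

lemma tubeFactor_pos (p : ℂ × ℂ) : 0 < tubeFactor ε p :=
  Real.sqrt_pos.2 (div_pos hε (max_imNormSq_pos hε p))

lemma tubeFactor_eq_one {p : ℂ × ℂ} (hp : imNormSq p ≤ ε) : tubeFactor ε p = 1 := by
  rw [tubeFactor, max_eq_left hp, div_self hε.ne', Real.sqrt_one]

lemma tubeFactor_sq_mul_imNormSq_le (p : ℂ × ℂ) : tubeFactor ε p ^ 2 * imNormSq p ≤ ε := by
  have hM := max_imNormSq_pos hε p
  rw [tubeFactor, Real.sq_sqrt (div_pos hε hM).le, div_mul_eq_mul_div, div_le_iff₀ hM]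
  exact mul_le_mul_of_nonneg_left (le_max_right _ _) hε.le

lemma continuous_tubeFactor : Continuous (tubeFactor ε) :=
  (continuous_const.div (by fun_prop) fun p => (max_imNormSq_pos hε p).ne').sqrt

end tubeFactor

lemma one_sub_mul_add_pos {s t : ℝ} (hs : 0 < s) (ht : t ∈ I) : 0 < (1 - t) * s + t := by
  rcases ht.1.eq_or_lt with rfl | ht₀
  · simpa using hs
  · nlinarith [ht.2]

noncomputable def tubeDeformation {ε : ℝ} (hε : 0 < ε) : C(I × (ℂ × ℂ), ℂ × ℂ) where
  toFun tp :=
    let u := (1 - (tp.1 : ℝ)) * tubeFactor ε tp.2 + tp.1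
    (imScale u tp.2.1, imScale u tp.2.2)
  continuous_toFun := by
    have := continuous_tubeFactor hε
    fun_prop

section tubeDeformation

variable {ε : ℝ} (hε : 0 < ε)

lemma tubeDeformation_mem_arrangementCompl_iff (a b c : ι → ℝ) (t : I) (p : ℂ × ℂ) :
    tubeDeformation hε (t, p) ∈ arrangementCompl a b c ↔ p ∈ arrangementCompl a b c :=
  imScale_mem_arrangementCompl_iff (one_sub_mul_add_pos (tubeFactor_pos hε p) t.2).ne' a b c p

lemma imNormSq_tubeDeformation_zero_le (p : ℂ × ℂ) : imNormSq (tubeDeformation hε (0, p)) ≤ ε := by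
  simpa [tubeDeformation, imNormSq_imScale] using tubeFactor_sq_mul_imNormSq_le hε p

lemma tubeDeformation_zero_of_imNormSq_le {p : ℂ × ℂ} (hp : imNormSq p ≤ ε) :
    tubeDeformation hε (0, p) = p := by
  simp [tubeDeformation, tubeFactor_eq_one hε hp]

lemma tubeDeformation_one (p : ℂ × ℂ) : tubeDeformation hε (1, p) = p := by
  simp [tubeDeformation]

end tubeDeformation

theorem stmt_12_general (k : ℕ) (a b c : Fin k → ℝ)
    (ε : ℝ) (hε : 0 < ε) :
    ∃ h : ContinuousMap.HomotopyEquiv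
      {p : ℂ × ℂ // (¬ ∃ i, (a i : ℂ) * p.1 + (b i : ℂ) * p.2 = (c i : ℂ)) ∧
        p.1.im ^ 2 + p.2.im ^ 2 ≤ ε}
      {p : ℂ × ℂ // ¬ ∃ i, (a i : ℂ) * p.1 + (b i : ℂ) * p.2 = (c i : ℂ)},
      ∀ q, ((h.toFun q : {p : ℂ × ℂ // ¬ ∃ i, (a i : ℂ) * p.1 + (b i : ℂ) * p.2 = (c i : ℂ)}) :
        ℂ × ℂ) = (q : ℂ × ℂ) :=
  exists_homotopyEquiv_inclusion_of_deformation
    (N := {p | p ∈ arrangementCompl a b c ∧ imNormSq p ≤ ε}) (fun _ hp => hp.1)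
    (tubeDeformation hε) (fun t p => (tubeDeformation_mem_arrangementCompl_iff hε a b c t p).2)
    (fun p hp => ⟨(tubeDeformation_mem_arrangementCompl_iff hε a b c 0 p).2 hp,
      imNormSq_tubeDeformation_zero_le hε p⟩)
    (fun _ hp => tubeDeformation_zero_of_imNormSq_le hε hp.2) (tubeDeformation_one hε)

/-- Let `𝒜` be the complexification of a finite arrangement of real lines in `ℝ² ⊂ ℂ²`,
and `f(x₁+iy₁, x₂+iy₂) = y₁² + y₂²`. For every `ε > 0`, the tube
`N_ε = {p ∈ ℂ² ∖ 𝒜 : f(p) ≤ ε}` is a deformation retract of `ℂ² ∖ 𝒜`: the inclusion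
`N_ε ↪ ℂ² ∖ 𝒜` is a homotopy equivalence. -/
theorem stmt_12 (k : ℕ) (a b c : Fin k → ℝ)
    (hline : ∀ i, (a i, b i) ≠ (0, 0)) (ε : ℝ) (hε : 0 < ε) :
    ∃ h : ContinuousMap.HomotopyEquiv
      {p : ℂ × ℂ // (¬ ∃ i, (a i : ℂ) * p.1 + (b i : ℂ) * p.2 = (c i : ℂ)) ∧
        p.1.im ^ 2 + p.2.im ^ 2 ≤ ε}
      {p : ℂ × ℂ // ¬ ∃ i, (a i : ℂ) * p.1 + (b i : ℂ) * p.2 = (c i : ℂ)},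
      ∀ q, ((h.toFun q : {p : ℂ × ℂ // ¬ ∃ i, (a i : ℂ) * p.1 + (b i : ℂ) * p.2 = (c i : ℂ)}) :
        ℂ × ℂ) = (q : ℂ × ℂ) :=
  stmt_12_general k a b c ε hε
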